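/- arXiv:1608.05845 — 2 statements merged into one kernel-verified Lean document; each statement's English description precedes it below -/
import Mathlib

section
/- In a monotone hierarchy with root i_0 and height h (all leaves at distance h from the root), for any nodes i, j with ρ(j) = ρ(i) + 1, the neighborhood statistic of i strictly first-order dominates that of j: for every distance t, the number of nodes within distance t of i is at least that of j, with strict inequality for t = h − ρ(i). -/
/-- `j` is a successor of `i` in the tree `g` oriented away from the root `r`. -/
def Succ {n : ℕ} (g : SimpleGraph (Fin n)) (r i j : Fin n) : Prop :=
  i ≠ j ∧ g.dist r j = g.dist r i + g.dist i j

/-- Number of nodes at distance at most `t` from `i`. -/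
noncomputable def ballCount {n : ℕ} (g : SimpleGraph (Fin n)) (i : Fin n) (t : ℕ) : ℕ :=
  Nat.card {k : Fin n | g.dist i k ≤ t}

/-- A monotone hierarchy (see the paper's definition). -/
def IsMonotoneHierarchy {n : ℕ} (g : SimpleGraph (Fin n)) [DecidableRel g.Adj]
    (r : Fin n) (h : ℕ) : Prop :=
  g.IsTree ∧
  (∀ i j, g.dist r i < g.dist r j → g.degree j ≤ g.degree i) ∧
  (∀ i j, g.dist r i = g.dist r j → g.degree j < g.degree i →
    ∀ k l, Succ g r i k → Succ g r j l → g.dist r k = g.dist r l →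
      g.degree l ≤ g.degree k) ∧
  (∀ i j, g.dist r i = g.dist r j → g.degree i = g.degree j →
    (∃ k l, Succ g r i k ∧ Succ g r j l ∧ g.dist r k = g.dist r l ∧
      g.degree l < g.degree k) →
    ∀ k l, Succ g r i k → Succ g r j l → g.dist r k = g.dist r l →
      g.degree l ≤ g.degree k) ∧
  (∀ i, g.degree i = 1 → g.dist r i = h)

/-!
The fourth clause of a monotone hierarchy, applied with `i = j = r`, makes all vertices of the
same depth have the same degree, so the tree is spherically symmetric: every vertex of depth `s`
has `c s` children, where `c` is non-increasing below the root, `c s < c 0` for `s ≥ 1`, and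
`c h = 0`. The ball of radius `t + 1` around a non-root vertex `v` is the ball of radius `t`
around its parent together with the descendants of `v` at distance `t` and `t + 1`, so ball sizes
depend only on the depth and obey an explicit recursion. Induction on the depth then compares a
vertex of depth `d + 1` with one of depth `d`: descendant counts of the deeper vertex are smaller
factor by factor, and at the root the extra descendants are absorbed by `c 0 > c (t + 1)`. At
radius `h - d` the deeper vertex has lost its descendants at that distance, which would lie below
depth `h`, so the inequality is strict there.
-/

open Finset

def descCount (c : ℕ → ℕ) (d k : ℕ) : ℕ := ∏ i ∈ range k, c (d + i)

theorem descCount_zero_succ (c : ℕ → ℕ) (k : ℕ) :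
    descCount c 0 (k + 1) = c 0 * descCount c 1 k := by
  simp [descCount, prod_range_succ', add_comm, mul_comm]

/-- The size of a ball of radius `t` around a vertex of depth `d`, in the rooted tree whose
vertices of depth `s` have `c s` children each. -/
def ballProfile (c : ℕ → ℕ) : ℕ → ℕ → ℕ
  | 0, t => ∑ s ∈ range (t + 1), descCount c 0 s
  | _ + 1, 0 => 1
  | d + 1, t + 1 => ballProfile c d t + descCount c (d + 1) t + descCount c (d + 1) (t + 1)

/-- The branching numbers of a spherically symmetric monotone hierarchy of height `h`. -/
structure IsHierarchyBranching (c : ℕ → ℕ) (h : ℕ) : Prop where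
  succ_le : ∀ s, 1 ≤ s → c (s + 1) ≤ c s
  lt_root : ∀ s, 1 ≤ s → c s < c 0
  two_le_root : 2 ≤ c 0
  pos : ∀ s < h, 0 < c s
  height : c h = 0

namespace IsHierarchyBranching

variable {c : ℕ → ℕ} {h : ℕ} (hc : IsHierarchyBranching c h)
include hc

theorem descCount_succ_le {d : ℕ} (hd : 1 ≤ d) (k : ℕ) :
    descCount c (d + 1) k ≤ descCount c d k :=
  prod_le_prod' fun i _ => by
    rw [add_right_comm]
    exact hc.succ_le _ (by omega)

theorem descCount_pos {d k : ℕ} (hdk : d + k ≤ h) : 0 < descCount c d k :=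
  prod_pos fun i hi => hc.pos _ (by simp at hi; omega)

theorem descCount_eq_zero {d k : ℕ} (hd : d ≤ h) (hk : h < d + k) : descCount c d k = 0 :=
  prod_eq_zero (i := h - d) (by simp; omega) (by rw [Nat.add_sub_cancel' hd, hc.height])

theorem descCount_one_add_le (t : ℕ) :
    descCount c 1 t + descCount c 1 (t + 1) ≤ descCount c 0 (t + 1) := by
  have hlast : descCount c 1 (t + 1) = descCount c 1 t * c (1 + t) := prod_range_succ _ _
  have := hc.lt_root (1 + t) (by omega)
  rw [descCount_zero_succ, hlast]
  nlinarith

theorem ballProfile_succ_le : ∀ d t, ballProfile c (d + 1) t ≤ ballProfile c d t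
  | 0, 0 => by simp [ballProfile, descCount]
  | _ + 1, 0 => le_rfl
  | 0, t + 1 => by
    have := hc.descCount_one_add_le t
    simp only [ballProfile, zero_add, sum_range_succ _ (t + 1)]
    omega
  | d + 1, t + 1 => by
    have := ballProfile_succ_le d t
    have := hc.descCount_succ_le (d := d + 1) (by omega) t
    have := hc.descCount_succ_le (d := d + 1) (by omega) (t + 1)
    simp only [ballProfile]
    omega

theorem ballProfile_succ_lt {d : ℕ} (hd : d < h) :
    ballProfile c (d + 1) (h - d) < ballProfile c d (h - d) := by
  obtain ⟨t, ht⟩ : ∃ t, h - d = t + 1 := ⟨h - d - 1, by omega⟩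
  rw [ht]
  cases d with
  | zero =>
    have := hc.descCount_eq_zero (d := 1) (k := t + 1) (by omega) (by omega)
    have := hc.descCount_pos (d := 1) (k := t) (by omega)
    have := hc.two_le_root
    simp only [ballProfile, zero_add, sum_range_succ _ (t + 1), descCount_zero_succ]
    nlinarith
  | succ d =>
    have := hc.ballProfile_succ_le d t
    have := hc.descCount_succ_le (d := d + 1) (by omega) t
    have := hc.descCount_eq_zero (d := d + 1 + 1) (k := t + 1) (by omega) (by omega)
    have := hc.descCount_pos (d := d + 1) (k := t + 1) (by omega)
    simp only [ballProfile]
    omega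

end IsHierarchyBranching

namespace SimpleGraph

variable {V : Type*} {G : SimpleGraph V} {r p q u v x y k : V}

def IsParent (G : SimpleGraph V) (r p v : V) : Prop :=
  G.Adj p v ∧ G.dist r v = G.dist r p + 1

/-- In a tree this says that `v` lies on the path from `r` to `k`. -/
def InSubtree (G : SimpleGraph V) (r v k : V) : Prop :=
  G.dist r k = G.dist r v + G.dist v k

theorem Connected.exists_adj_dist_add_one (hG : G.Connected) (huv : u ≠ v) :
    ∃ w, G.Adj u w ∧ G.dist w v + 1 = G.dist u v := by
  obtain ⟨P, hP⟩ := hG.exists_walk_length_eq_dist u v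
  cases P with
  | nil => exact absurd rfl huv
  | @cons _ w _ hadj Q =>
    refine ⟨w, hadj, le_antisymm ?_ ?_⟩
    · have := dist_le Q
      rw [Walk.length_cons] at hP
      omega
    · have := hG.dist_triangle (u := u) (v := w) (w := v)
      rwa [dist_eq_one_iff_adj.mpr hadj, add_comm] at this

theorem Connected.exists_isParent (hG : G.Connected) (hv : v ≠ r) : ∃ p, G.IsParent r p v := by
  obtain ⟨p, hadj, hp⟩ := hG.exists_adj_dist_add_one hv
  exact ⟨p, hadj.symm, by rw [dist_comm, ← hp, dist_comm]⟩

theorem Connected.exists_dist_eq_of_le (hG : G.Connected) {a : ℕ} (ha : a ≤ G.dist r v) :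
    ∃ x, G.dist r x = a := by
  induction h : G.dist r v - a generalizing v with
  | zero => exact ⟨v, by omega⟩
  | succ m ih =>
    obtain ⟨p, -, hp⟩ := hG.exists_isParent (r := r) (v := v) (by rintro rfl; simp at h)
    exact ih (v := p) (by omega) (by omega)

theorem IsTree.isParent_unique (hG : G.IsTree) (hp : G.IsParent r p v) (hq : G.IsParent r q v) :
    p = q := by
  classical
  obtain ⟨P, hP, -⟩ := hG.connected.exists_path_of_dist r v
  suffices ∀ p, G.IsParent r p v → p = P.penultimate from (this p hp).trans (this q hq).symm
  rintro p ⟨hadj, hdist⟩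
  obtain ⟨Q, hQ, hQlen⟩ := hG.connected.exists_path_of_dist r p
  have hvQ : v ∉ Q.support := fun hv => by
    have := (dist_le (Q.takeUntil v hv)).trans (Q.length_takeUntil_le_length hv)
    omega
  exact hG.isAcyclic.eq_penultimate_of_adj_end hP hadj.symm
    (hG.isAcyclic.mem_support_of_ne_mem_support_of_adj_of_isPath hP hQ hadj.symm hvQ)

theorem IsTree.isParent_or_isParent (hG : G.IsTree) (hadj : G.Adj u v) :
    G.IsParent r u v ∨ G.IsParent r v u :=
  (hG.dist_eq_dist_add_one_of_adj r hadj).symm.imp (⟨hadj, ·⟩) (⟨hadj.symm, ·⟩)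

theorem inSubtree_root (k : V) : G.InSubtree r r k := by
  simp [InSubtree]

theorem inSubtree_self (v : V) : G.InSubtree r v v := by
  simp [InSubtree]

theorem InSubtree.trans_isParent (hG : G.Connected) (hvx : G.InSubtree r v x)
    (hxy : G.IsParent r x y) : G.InSubtree r v y := by
  have h₁ : G.dist v y ≤ G.dist v x + G.dist x y := hG.dist_triangle
  have h₂ : G.dist r y ≤ G.dist r v + G.dist v y := hG.dist_triangle
  rw [dist_eq_one_iff_adj.mpr hxy.1] at h₁
  unfold InSubtree IsParent at *
  omega

theorem InSubtree.dist_isParent (hG : G.Connected) (hvk : G.InSubtree r v k)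
    (hp : G.IsParent r p v) : G.dist p k = G.dist v k + 1 := by
  have h₁ : G.dist p k ≤ G.dist p v + G.dist v k := hG.dist_triangle
  have h₂ : G.dist r k ≤ G.dist r p + G.dist p k := hG.dist_triangle
  rw [dist_eq_one_iff_adj.mpr hp.1] at h₁
  unfold InSubtree IsParent at *
  omega

/-- The first step of a geodesic from `k` back to `v` is the parent of `k`. -/
theorem InSubtree.isParent (hG : G.IsTree) (hvk : G.InSubtree r v k) (hne : v ≠ k)
    (hp : G.IsParent r p k) : G.InSubtree r v p := by
  obtain ⟨w, hadj, hw⟩ := hG.connected.exists_adj_dist_add_one hne.symm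
  have h₁ : G.dist r w ≤ G.dist r v + G.dist v w := hG.connected.dist_triangle
  have h₂ : G.dist r k ≤ G.dist r w + G.dist w k := hG.connected.dist_triangle
  rw [dist_comm (u := w) (v := k), dist_eq_one_iff_adj.mpr hadj] at h₂
  rw [dist_comm (u := w), dist_comm (u := k)] at hw
  have hwp : G.IsParent r w k := ⟨hadj.symm, by unfold InSubtree at hvk; omega⟩
  rw [← hG.isParent_unique hwp hp]
  unfold InSubtree at *
  omega

theorem IsTree.inSubtree_of_dist_isParent (hG : G.IsTree) (hp : G.IsParent r p v)
    (hk : G.dist p k = G.dist v k + 1) : G.InSubtree r v k := by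
  induction hd : G.dist v k generalizing v p with
  | zero =>
    rw [hG.connected.dist_eq_zero_iff.mp hd]
    exact inSubtree_self k
  | succ d ih =>
    obtain ⟨w, hadj, hw⟩ := hG.connected.exists_adj_dist_add_one (u := v) (v := k)
      (by rintro rfl; simp at hd)
    rcases hG.isParent_or_isParent (r := r) hadj with hvw | hwv
    · have hwk := ih hvw (by omega) (by omega)
      unfold InSubtree IsParent at *
      omega
    · rw [hG.isParent_unique hwv hp] at hw
      omega

theorem IsTree.dist_isParent_of_not_inSubtree (hG : G.IsTree) (hp : G.IsParent r p v)
    (hk : ¬ G.InSubtree r v k) : G.dist v k = G.dist p k + 1 := by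
  rw [dist_comm, dist_comm (u := p)]
  refine (hG.dist_eq_dist_add_one_of_adj k hp.1.symm).resolve_right fun h => hk ?_
  exact hG.inSubtree_of_dist_isParent hp (by rw [dist_comm, h, dist_comm])

section Counting

open scoped Classical

variable [Fintype V] {c : ℕ → ℕ}

noncomputable def children (G : SimpleGraph V) (r x : V) : Finset V := {y | G.IsParent r x y}

noncomputable def subtreeLevel (G : SimpleGraph V) (r v : V) (s : ℕ) : Finset V :=
  {k | G.InSubtree r v k ∧ G.dist v k = s}

@[simp]
theorem mem_children : y ∈ G.children r x ↔ G.IsParent r x y := by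
  simp [children]

@[simp]
theorem mem_subtreeLevel {s : ℕ} :
    k ∈ G.subtreeLevel r v s ↔ G.InSubtree r v k ∧ G.dist v k = s := by
  simp [subtreeLevel]

theorem IsTree.degree_eq_card_children [DecidableRel G.Adj] (hG : G.IsTree) (x : V) :
    G.degree x = #(G.children r x) + if x = r then 0 else 1 := by
  rw [← card_neighborFinset_eq_degree,
    ← card_filter_add_card_filter_not (s := G.neighborFinset x) (G.IsParent r x)]
  congr 1
  · congr 1
    ext y
    simp only [mem_children, mem_filter, mem_neighborFinset, IsParent]
    exact ⟨fun h => h.2, fun h => ⟨h.1, h⟩⟩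
  · split_ifs with hx
    · subst hx
      refine card_eq_zero.mpr (filter_eq_empty_iff.mpr fun y hy hne => ?_)
      rcases hG.isParent_or_isParent (r := x) ((mem_neighborFinset _ _ _).mp hy) with h | h
      · exact hne h
      · simpa [IsParent] using h.2
    · obtain ⟨p, hp⟩ := hG.connected.exists_isParent hx
      refine card_eq_one.mpr ⟨p, eq_singleton_iff_unique_mem.mpr ⟨?_, fun y hy => ?_⟩⟩
      · simp only [mem_filter, mem_neighborFinset]
        exact ⟨hp.1.symm, fun h => by have := hp.2; have := h.2; omega⟩
      · simp only [mem_filter, mem_neighborFinset] at hy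
        exact hG.isParent_unique ((hG.isParent_or_isParent hy.1).resolve_left hy.2) hp

theorem IsTree.subtreeLevel_succ (hG : G.IsTree) (v : V) (s : ℕ) :
    G.subtreeLevel r v (s + 1) = (G.subtreeLevel r v s).biUnion (G.children r) := by
  ext k
  simp only [mem_subtreeLevel, mem_children, mem_biUnion]
  constructor
  · rintro ⟨hvk, hd⟩
    have hne : v ≠ k := by rintro rfl; simp at hd
    obtain ⟨p, hp⟩ := hG.connected.exists_isParent (r := r) (v := k)
      (by rintro rfl; simp only [InSubtree, dist_self] at hvk; omega)
    have hvp := hvk.isParent hG hne hp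
    refine ⟨p, ⟨hvp, ?_⟩, hp⟩
    unfold InSubtree IsParent at *
    omega
  · rintro ⟨x, ⟨hvx, hd⟩, hxk⟩
    have hvk := hvx.trans_isParent hG.connected hxk
    refine ⟨hvk, ?_⟩
    unfold InSubtree IsParent at *
    omega

theorem IsTree.card_subtreeLevel (hG : G.IsTree) (hc : ∀ x, #(G.children r x) = c (G.dist r x))
    (v : V) (s : ℕ) : #(G.subtreeLevel r v s) = descCount c (G.dist r v) s := by
  induction s with
  | zero =>
    have : G.subtreeLevel r v 0 = {v} := by
      ext k
      simp only [mem_subtreeLevel, mem_singleton,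
        hG.connected.dist_eq_zero_iff, eq_comm (a := k), and_iff_right_iff_imp]
      rintro rfl
      exact inSubtree_self v
    simp [this, descCount]
  | succ s ih =>
    have hdisj : (G.subtreeLevel r v s : Set V).PairwiseDisjoint (G.children r) :=
      fun _ _ _ _ hxy => Finset.disjoint_left.mpr fun _ hx hy =>
        hxy (hG.isParent_unique (mem_children.mp hx) (mem_children.mp hy))
    have hlevel : ∀ x ∈ G.subtreeLevel r v s, #(G.children r x) = c (G.dist r v + s) := by
      intro x hx
      simp only [mem_subtreeLevel, InSubtree] at hx
      rw [hc, hx.1, hx.2]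
    rw [hG.subtreeLevel_succ, card_biUnion hdisj, sum_congr rfl hlevel, sum_const, ih,
      smul_eq_mul, descCount, descCount, prod_range_succ]

theorem Connected.card_dist_le_zero (hG : G.Connected) (v : V) : #{k | G.dist v k ≤ 0} = 1 := by
  rw [card_eq_one]
  exact ⟨v, by ext k; simp [hG.dist_eq_zero_iff, eq_comm]⟩

theorem IsTree.card_dist_root_le (hG : G.IsTree) (hc : ∀ x, #(G.children r x) = c (G.dist r x))
    (t : ℕ) : #{k | G.dist r k ≤ t} = ∑ s ∈ range (t + 1), descCount c 0 s := by
  rw [card_eq_sum_card_fiberwise (f := G.dist r) (t := range (t + 1))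
    (fun k hk => by simpa [Nat.lt_succ_iff] using hk)]
  refine sum_congr rfl fun s hs => ?_
  have : ({k ∈ {k | G.dist r k ≤ t} | G.dist r k = s} : Finset V) = G.subtreeLevel r r s := by
    ext k
    simp only [mem_subtreeLevel, mem_filter, mem_univ, true_and, inSubtree_root,
      mem_range] at hs ⊢
    omega
  rw [this, hG.card_subtreeLevel hc, dist_self]

theorem IsTree.card_dist_le_succ (hG : G.IsTree) (hp : G.IsParent r p v) (t : ℕ) :
    #{k | G.dist v k ≤ t + 1} =
      #{k | G.dist p k ≤ t} + #(G.subtreeLevel r v t) + #(G.subtreeLevel r v (t + 1)) := by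
  have hsub : ({k | G.dist p k ≤ t} : Finset V) ⊆ ({k | G.dist v k ≤ t + 1} : Finset V) := by
    intro k
    simp only [mem_filter, mem_univ, true_and]
    intro hk
    have : G.dist v k ≤ G.dist v p + G.dist p k := hG.connected.dist_triangle
    rw [dist_eq_one_iff_adj.mpr hp.1.symm] at this
    omega
  have hdiff : ({k | G.dist v k ≤ t + 1} : Finset V) \ ({k | G.dist p k ≤ t} : Finset V) =
      G.subtreeLevel r v t ∪ G.subtreeLevel r v (t + 1) := by
    ext k
    simp only [mem_subtreeLevel, mem_sdiff, mem_union, mem_filter, mem_univ, true_and]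
    by_cases hk : G.InSubtree r v k
    · have := hk.dist_isParent hG.connected hp
      simp only [hk, true_and]
      constructor <;> intro <;> omega
    · have := hG.dist_isParent_of_not_inSubtree hp hk
      simp only [hk, false_and, or_false, iff_false, not_and, not_not]
      omega
  have hdisj : Disjoint (G.subtreeLevel r v t) (G.subtreeLevel r v (t + 1)) :=
    disjoint_filter.mpr fun k _ h₁ h₂ => by omega
  rw [← card_sdiff_add_card_eq_card hsub, hdiff, card_union_of_disjoint hdisj]
  omega

theorem IsTree.card_dist_le_eq_ballProfile (hG : G.IsTree)
    (hc : ∀ x, #(G.children r x) = c (G.dist r x)) (v : V) (t : ℕ) :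
    #{k | G.dist v k ≤ t} = ballProfile c (G.dist r v) t := by
  induction hd : G.dist r v generalizing v t with
  | zero =>
    rw [← hG.connected.dist_eq_zero_iff.mp hd, hG.card_dist_root_le hc, ballProfile]
  | succ d ih =>
    obtain ⟨p, hp⟩ := hG.connected.exists_isParent (r := r) (v := v) (by rintro rfl; simp at hd)
    cases t with
    | zero => rw [hG.connected.card_dist_le_zero, ballProfile]
    | succ t =>
      rw [hG.card_dist_le_succ hp, ih p t (by have := hp.2; omega), hG.card_subtreeLevel hc,
        hG.card_subtreeLevel hc, hd, ballProfile]

noncomputable def levelBranching (G : SimpleGraph V) (r : V) (a : ℕ) : ℕ :=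
  if h : ∃ x, G.dist r x = a then #(G.children r h.choose) else 0

theorem card_children_eq_levelBranching
    (hreg : ∀ x y, G.dist r x = G.dist r y → #(G.children r x) = #(G.children r y)) (x : V) :
    #(G.children r x) = G.levelBranching r (G.dist r x) := by
  have h : ∃ y, G.dist r y = G.dist r x := ⟨x, rfl⟩
  rw [levelBranching, dif_pos h]
  exact hreg _ _ h.choose_spec.symm

end Counting

end SimpleGraph

namespace IsMonotoneHierarchy

open SimpleGraph

variable {n : ℕ} {g : SimpleGraph (Fin n)} [DecidableRel g.Adj] {r : Fin n} {h : ℕ}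

theorem degree_eq_of_dist_eq (hMH : IsMonotoneHierarchy g r h) {x y : Fin n}
    (hxy : g.dist r x = g.dist r y) : g.degree x = g.degree y := by
  obtain ⟨hT, -, -, hsucc, -⟩ := hMH
  -- Every vertex other than `r` is a successor of `r`, so the fourth clause with `i = j = r`
  -- compares any two vertices of the same depth.
  have key : ∀ x y, g.dist r x = g.dist r y → ¬ g.degree y < g.degree x := by
    intro x y hxy hlt
    have hxr : x ≠ r := by
      rintro rfl
      rw [dist_self, eq_comm, hT.connected.dist_eq_zero_iff] at hxy
      exact hlt.ne (by rw [hxy])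
    have hyr : y ≠ r := by
      rintro rfl
      rw [dist_self, hT.connected.dist_eq_zero_iff] at hxy
      exact hlt.ne (by rw [hxy])
    have hsx : Succ g r r x := ⟨hxr.symm, by simp⟩
    have hsy : Succ g r r y := ⟨hyr.symm, by simp⟩
    exact (hsucc r r rfl rfl ⟨x, y, hsx, hsy, hxy, hlt⟩ y x hsy hsx hxy.symm).not_gt hlt
  exact le_antisymm (not_lt.mp (key x y hxy)) (not_lt.mp (key y x hxy.symm))

theorem card_children_eq (hMH : IsMonotoneHierarchy g r h) (x : Fin n) :
    #(g.children r x) = g.levelBranching r (g.dist r x) := by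
  refine card_children_eq_levelBranching (fun x y hxy => ?_) x
  have hdeg := hMH.degree_eq_of_dist_eq hxy
  have hroot : x = r ↔ y = r := by
    rw [eq_comm, ← hMH.1.connected.dist_eq_zero_iff, hxy, hMH.1.connected.dist_eq_zero_iff,
      eq_comm]
  rw [hMH.1.degree_eq_card_children (r := r) x, hMH.1.degree_eq_card_children (r := r) y,
    hroot] at hdeg
  split_ifs at hdeg <;> omega

theorem degree_eq_levelBranching_add_one (hMH : IsMonotoneHierarchy g r h) {x : Fin n}
    (hx : x ≠ r) : g.degree x = g.levelBranching r (g.dist r x) + 1 := by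
  rw [hMH.1.degree_eq_card_children (r := r), if_neg hx, hMH.card_children_eq]

theorem degree_root (hMH : IsMonotoneHierarchy g r h) : g.degree r = g.levelBranching r 0 := by
  rw [hMH.1.degree_eq_card_children (r := r), if_pos rfl, hMH.card_children_eq, dist_self,
    add_zero]

theorem isGreatest_dist (hMH : IsMonotoneHierarchy g r h) {j : Fin n} (hj : 0 < g.dist r j) :
    IsGreatest (Set.range (g.dist r)) h := by
  have : Nonempty (Fin n) := ⟨j⟩
  obtain ⟨m, hm⟩ := Finite.exists_max (g.dist r)
  have hmr : m ≠ r := by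
    rintro rfl
    simpa using (hj.trans_le (hm j)).ne'
  have hchildren : g.children r m = ∅ := eq_empty_of_forall_notMem fun y hy => by
    have := (mem_children.mp hy).2
    have := hm y
    omega
  have hleaf : g.degree m = 1 := by
    rw [hMH.1.degree_eq_card_children (r := r), if_neg hmr, hchildren, card_empty]
  have hmh := hMH.2.2.2.2 m hleaf
  exact ⟨⟨m, hmh⟩, by rintro _ ⟨x, rfl⟩; exact hmh ▸ hm x⟩

theorem levelBranching_pos (hMH : IsMonotoneHierarchy g r h) {j : Fin n} (hj : 0 < g.dist r j)
    {s : ℕ} (hs : s < h) : 0 < g.levelBranching r s := by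
  obtain ⟨⟨m, hm⟩, -⟩ := hMH.isGreatest_dist hj
  have hconn := hMH.1.connected
  obtain ⟨x, hx⟩ := hconn.exists_dist_eq_of_le (r := r) (v := m) (a := s + 1) (by omega)
  obtain ⟨p, hp⟩ := hconn.exists_isParent (r := r) (v := x) (by rintro rfl; simp at hx)
  rw [show s = g.dist r p by have := hp.2; omega, ← hMH.card_children_eq]
  exact card_pos.mpr ⟨x, mem_children.mpr hp⟩

theorem levelBranching_height (hMH : IsMonotoneHierarchy g r h) {j : Fin n}
    (hj : 0 < g.dist r j) : g.levelBranching r h = 0 := by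
  obtain ⟨⟨m, hm⟩, hmax⟩ := hMH.isGreatest_dist hj
  rw [← hm, ← hMH.card_children_eq, card_eq_zero]
  refine eq_empty_of_forall_notMem fun y hy => ?_
  have := (mem_children.mp hy).2
  have := hmax ⟨y, rfl⟩
  omega

theorem two_le_levelBranching_zero (hMH : IsMonotoneHierarchy g r h) {j : Fin n}
    (hj : 0 < g.dist r j) : 2 ≤ g.levelBranching r 0 := by
  have hh : 0 < h := hj.trans_le ((hMH.isGreatest_dist hj).2 ⟨j, rfl⟩)
  have hr : g.degree r ≠ 1 := fun hr => by
    have := hMH.2.2.2.2 r hr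
    simp at this
    omega
  have := hMH.levelBranching_pos hj hh
  rw [hMH.degree_root] at hr
  omega

theorem isHierarchyBranching (hMH : IsMonotoneHierarchy g r h) {j : Fin n}
    (hj : 0 < g.dist r j) : IsHierarchyBranching (g.levelBranching r) h := by
  have hne_root : ∀ {x}, 1 ≤ g.dist r x → x ≠ r := by
    rintro x hx rfl
    simp at hx
  refine ⟨fun s hs => ?_, fun s hs => ?_, hMH.two_le_levelBranching_zero hj,
    fun s => hMH.levelBranching_pos hj, hMH.levelBranching_height hj⟩
  · by_cases hlev : ∃ x, g.dist r x = s + 1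
    · obtain ⟨x, hx⟩ := hlev
      obtain ⟨p, hp⟩ := hMH.1.connected.exists_isParent (hne_root (x := x) (by omega))
      have hps : g.dist r p = s := by have := hp.2; omega
      have hdeg := hMH.2.1 p x (by omega)
      rw [hMH.degree_eq_levelBranching_add_one (hne_root (by omega)),
        hMH.degree_eq_levelBranching_add_one (hne_root (by omega)), hx, hps] at hdeg
      omega
    · rw [levelBranching, dif_neg hlev]
      exact Nat.zero_le _
  · by_cases hlev : ∃ x, g.dist r x = s
    · obtain ⟨x, hx⟩ := hlev
      have hdeg := hMH.2.1 r x (by simp; omega)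
      rw [hMH.degree_eq_levelBranching_add_one (hne_root (by omega)), hMH.degree_root, hx] at hdeg
      omega
    · rw [levelBranching, dif_neg hlev]
      exact (Nat.zero_lt_two).trans_le (hMH.two_le_levelBranching_zero hj)

end IsMonotoneHierarchy

theorem ballCount_eq_card {n : ℕ} (g : SimpleGraph (Fin n)) (v : Fin n) (t : ℕ) :
    ballCount g v t = #{k | g.dist v k ≤ t} := by
  rw [ballCount, Nat.card_eq_fintype_card, Fintype.card_subtype]
  rfl

/-- In a monotone hierarchy of height `h`, if `ρ(j) = ρ(i) + 1` then the neighborhood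
statistic of `i` strictly first-order dominates that of `j`: every ball around `i`
is at least as large as the corresponding ball around `j`, strictly so at radius
`h − ρ(i)`. -/
theorem stmt_16 {n : ℕ} (g : SimpleGraph (Fin n)) [DecidableRel g.Adj]
    (r : Fin n) (h : ℕ) (hMH : IsMonotoneHierarchy g r h)
    (i j : Fin n) (hdepth : g.dist r j = g.dist r i + 1) :
    (∀ t : ℕ, ballCount g j t ≤ ballCount g i t) ∧
      ballCount g j (h - g.dist r i) < ballCount g i (h - g.dist r i) := by
  have hj : 0 < g.dist r j := by omega
  have hc := hMH.isHierarchyBranching hj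
  have hball : ∀ v t, ballCount g v t = ballProfile (g.levelBranching r) (g.dist r v) t :=
    fun v t => by rw [ballCount_eq_card, hMH.1.card_dist_le_eq_ballProfile hMH.card_children_eq]
  have hi : g.dist r i < h := by
    have := (hMH.isGreatest_dist hj).2 ⟨j, rfl⟩
    omega
  simp only [hball, hdepth]
  exact ⟨hc.ballProfile_succ_le _, hc.ballProfile_succ_lt hi⟩
end

section
/- Let g be a tree, and suppose there exist nodes i, j with ρ(j) = ρ(i) + 1 (distances to a fixed root chosen as the middle node of a diameter-realizing path of even length) but d_j > d_i, where h is the maximal distance from the root to a leaf. Then the neighborhood statistics of i and j are incomparable under first-order dominance: the number of nodes within distance 1 of j exceeds that of i, while the number of nodes within distance h + ρ(i) of i exceeds that of j. -/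
open SimpleGraph Walk

/-- In a tree, every path realizes the distance between its endpoints. -/
lemma tree_path_length {V : Type*} [DecidableEq V] {g : SimpleGraph V} (htree : g.IsTree)
    {a b : V} {p : g.Walk a b} (hp : p.IsPath) : p.length = g.dist a b := by
  obtain ⟨q, hq⟩ := htree.isConnected.exists_walk_length_eq_dist a b
  have hb : q.bypass.IsPath := q.bypass_isPath
  have h1 : q.bypass.length ≤ g.dist a b := hq ▸ q.length_bypass_le
  have h2 : g.dist a b ≤ q.bypass.length := SimpleGraph.dist_le _
  have := (htree.existsUnique_path a b).unique hp hb
  rw [this]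
  omega

lemma dist_add_dist_le_length {V : Type*} [DecidableEq V] {g : SimpleGraph V}
    {a b z : V} (p : g.Walk a b) (hz : z ∈ p.support) :
    g.dist a z + g.dist z b ≤ p.length := by
  have h1 : g.dist a z ≤ (p.takeUntil z hz).length := SimpleGraph.dist_le _
  have h2 : g.dist z b ≤ (p.dropUntil z hz).length := SimpleGraph.dist_le _
  have h3 : (p.takeUntil z hz).length + (p.dropUntil z hz).length = p.length := by
    rw [← Walk.length_append, Walk.take_spec]
  omega

lemma getVert_one_append {V : Type*} {g : SimpleGraph V} {a b c : V}
    (p : g.Walk a b) (q : g.Walk b c) (hp : 1 ≤ p.length) :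
    (p.append q).getVert 1 = p.getVert 1 := by
  rw [Walk.getVert_append]
  rcases lt_or_eq_of_le hp with h | h
  · simp [h]
  · simp only [← h, lt_self_iff_false, if_false, Nat.sub_self]
    rw [Walk.getVert_zero, h, Walk.getVert_length]

/-- Key lemma: if the first step of the path `S : j → r` (i.e. the neighbor of `r`
on `S`) avoids a path `Q : r → t`, then `S.append Q` is a path. -/
lemma key_append_isPath {V : Type*} [DecidableEq V] {g : SimpleGraph V} (htree : g.IsTree)
    {j r t : V} (S : g.Walk j r) (hS : S.IsPath) (hSlen : 1 ≤ S.length)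
    (Q : g.Walk r t) (hQ : Q.IsPath)
    (hw : S.reverse.getVert 1 ∉ Q.support) :
    (S.append Q).IsPath := by
  set w := S.reverse.getVert 1 with hwdef
  rw [Walk.isPath_def, Walk.support_append]
  refine List.Nodup.append ((Walk.isPath_def _).mp hS) (((Walk.isPath_def _).mp hQ).tail) ?_
  intro y hyS hyQt
  have hyQ : y ∈ Q.support := List.mem_of_mem_tail hyQt
  have hynr : y ≠ r := by
    rintro rfl
    have := (Walk.isPath_def _).mp hQ
    rw [Walk.support_eq_cons] at this
    exact (List.nodup_cons.mp this).1 hyQt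
  -- the suffix of S from y to r equals the (reversed) prefix of Q from r to y
  have hSy : (S.dropUntil y hyS).IsPath := hS.dropUntil hyS
  have hQy : ((Q.takeUntil y hyQ).reverse).IsPath := (hQ.takeUntil hyQ).reverse
  have huniq : S.dropUntil y hyS = (Q.takeUntil y hyQ).reverse :=
    (htree.existsUnique_path y r).unique hSy hQy
  have hlenSy : 1 ≤ (S.dropUntil y hyS).length := by
    have h0 : (S.dropUntil y hyS).length ≠ 0 := fun h0 => hynr (Walk.eq_of_length_eq_zero h0)
    omega
  -- w is the second vertex of the reversal of the suffix
  have hw2 : w = (S.dropUntil y hyS).reverse.getVert 1 := by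
    conv_lhs => rw [hwdef, ← Walk.take_spec S hyS]
    rw [Walk.reverse_append]
    exact getVert_one_append _ _ (by rwa [Walk.length_reverse])
  have hwmem : w ∈ (S.dropUntil y hyS).reverse.support := by
    rw [hw2]
    exact Walk.mem_support_iff_exists_getVert.mpr ⟨1, rfl, by rwa [Walk.length_reverse]⟩
  rw [huniq] at hwmem
  have : w ∈ Q.support := by
    have h1 : w ∈ (Q.takeUntil y hyQ).support := by
      rw [Walk.support_reverse, Walk.support_reverse, List.mem_reverse,
        List.mem_reverse] at hwmem
      exact hwmem
    exact Walk.support_takeUntil_subset _ hyQ h1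
  exact absurd this hw

/-- In a tree where `r` is the midpoint of a diametral pair `u, v` at distance `2h`,
every vertex `j` has some vertex at distance exactly `h + dist r j` from it. -/
lemma exists_far {V : Type*} [DecidableEq V] {g : SimpleGraph V} (htree : g.IsTree)
    {r u v : V} {h : ℕ} (hu : g.dist r u = h) (hv : g.dist r v = h)
    (huv : g.dist u v = 2 * h) (j : V) :
    ∃ k, g.dist j k = h + g.dist r j := by
  have hconn := htree.isConnected
  by_cases hjr : j = r
  · subst hjr
    exact ⟨u, by simp [hu, hconn.dist_eq_zero_iff.mpr rfl]⟩
  obtain ⟨S, hS⟩ := (htree.existsUnique_path j r).exists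
  obtain ⟨P, hP⟩ := (htree.existsUnique_path r u).exists
  obtain ⟨Q, hQ⟩ := (htree.existsUnique_path r v).exists
  have hSlen : S.length = g.dist j r := tree_path_length htree hS
  have hPlen : P.length = h := by rw [tree_path_length htree hP, hu]
  have hQlen : Q.length = h := by rw [tree_path_length htree hQ, hv]
  have hSpos : 1 ≤ S.length := by
    rcases Nat.eq_zero_or_pos S.length with h0 | h1
    · exact absurd (Walk.eq_of_length_eq_zero h0) hjr
    · exact h1
  -- P and Q intersect only at r
  have claim0 : ∀ z, z ∈ P.support → z ∈ Q.support → z = r := by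
    intro z hzP hzQ
    have h1 : g.dist r z + g.dist z u ≤ h := hPlen ▸ dist_add_dist_le_length P hzP
    have h2 : g.dist r z + g.dist z v ≤ h := hQlen ▸ dist_add_dist_le_length Q hzQ
    have h3 : g.dist u v ≤ g.dist u z + g.dist z v := hconn.dist_triangle
    have h4 : g.dist u z = g.dist z u := SimpleGraph.dist_comm
    have h5 : g.dist r z = 0 := by omega
    exact (hconn.dist_eq_zero_iff.mp h5).symm
  -- w : the neighbor of r on S
  set w := S.reverse.getVert 1 with hwdef
  have hadj : g.Adj r w := by
    have := S.reverse.adj_getVert_succ (i := 0) (by rwa [Walk.length_reverse])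
    rwa [Walk.getVert_zero] at this
  have hwnr : w ≠ r := hadj.ne'
  have hwPQ : w ∉ P.support ∨ w ∉ Q.support := by
    by_contra hcon
    push_neg at hcon
    exact hwnr (claim0 w hcon.1 hcon.2)
  rcases hwPQ with hwP | hwQ
  · -- extend S by P to reach u
    refine ⟨u, ?_⟩
    have hpath := key_append_isPath htree S hS hSpos P hP hwP
    have := tree_path_length htree hpath
    rw [Walk.length_append, hSlen, hPlen] at this
    rw [← this, SimpleGraph.dist_comm (u := r) (v := j)]
    omega
  · refine ⟨v, ?_⟩
    have hpath := key_append_isPath htree S hS hSpos Q hQ hwQ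
    have := tree_path_length htree hpath
    rw [Walk.length_append, hSlen, hQlen] at this
    rw [← this, SimpleGraph.dist_comm (u := r) (v := j)]
    omega

/-- In a tree with even diameter `2h`, rooted at the middle node `r` of a
diameter-realizing path, if `ρ(j) = ρ(i) + 1` but `d_j > d_i`, then the neighborhood
statistics of `i` and `j` are incomparable under first-order dominance: `j` has more
nodes within distance `1`, while `i` has more nodes within distance `h + ρ(i)`. -/
theorem stmt_17 {n : ℕ} (g : SimpleGraph (Fin n)) [DecidableRel g.Adj]
    (htree : g.IsTree) (r : Fin n) (h : ℕ)
    (hecc : ∀ k, g.dist r k ≤ h)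
    (hdiam : ∃ u v : Fin n, g.dist u v = 2 * h ∧ g.dist r u = h ∧ g.dist r v = h)
    (hdiam' : ∀ x y : Fin n, g.dist x y ≤ 2 * h)
    (i j : Fin n) (hdepth : g.dist r j = g.dist r i + 1)
    (hdeg : g.degree i < g.degree j) :
    ballCount g i 1 < ballCount g j 1 ∧
      ballCount g j (h + g.dist r i) < ballCount g i (h + g.dist r i) := by
  have hconn := htree.isConnected
  -- Part 1: balls of radius one are degree + 1
  have hball1 : ∀ x : Fin n, ballCount g x 1 = g.degree x + 1 := by
    intro x
    have hset : {k : Fin n | g.dist x k ≤ 1} = insert x (g.neighborSet x) := by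
      ext k
      simp only [Set.mem_setOf_eq, Set.mem_insert_iff, SimpleGraph.mem_neighborSet]
      constructor
      · intro hk
        rcases Nat.le_one_iff_eq_zero_or_eq_one.mp hk with h0 | h1
        · exact Or.inl (hconn.dist_eq_zero_iff.mp h0).symm
        · exact Or.inr (SimpleGraph.dist_eq_one_iff_adj.mp h1)
      · rintro (rfl | hadj)
        · simp [hconn.dist_eq_zero_iff.mpr rfl]
        · exact le_of_eq (SimpleGraph.dist_eq_one_iff_adj.mpr hadj)
    rw [ballCount, hset, Nat.card_coe_set_eq,
      Set.ncard_insert_of_notMem (by simp) (Set.toFinite _)]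
    rw [Set.ncard_eq_toFinset_card']
    congr 1
  refine ⟨by rw [hball1 i, hball1 j]; omega, ?_⟩
  -- Part 2
  obtain ⟨u, v, huv, hu, hv⟩ := hdiam
  have hiball : {k : Fin n | g.dist i k ≤ h + g.dist r i} = Set.univ := by
    ext k
    simp only [Set.mem_setOf_eq, Set.mem_univ, iff_true]
    have h1 : g.dist i k ≤ g.dist i r + g.dist r k := hconn.dist_triangle
    have h2 : g.dist i r = g.dist r i := SimpleGraph.dist_comm
    have h3 := hecc k
    omega
  obtain ⟨k0, hk0⟩ := exists_far htree hu hv huv j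
  have hk0' : k0 ∉ {k : Fin n | g.dist j k ≤ h + g.dist r i} := by
    simp only [Set.mem_setOf_eq, not_le]
    omega
  have hssub : {k : Fin n | g.dist j k ≤ h + g.dist r i} ⊂ Set.univ := by
    refine Set.ssubset_univ_iff.mpr ?_
    intro hcon
    exact hk0' (hcon ▸ Set.mem_univ k0)
  have := Set.ncard_lt_ncard hssub Set.finite_univ
  rw [ballCount, ballCount, hiball, Nat.card_coe_set_eq, Nat.card_coe_set_eq]
  exact this
end
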